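/- arXiv:2101.08524 — 4 statements merged into one kernel-verified Lean document; each statement's English description precedes it below -/
import Mathlib

section
/- Let E ∈ ℝ^{3×3} and t ∈ ℝ³ with tᵀt = 1 satisfy E Eᵀ = [t]× [t]×ᵀ. Then there exists R ∈ SO(3) such that E = [t]× R. Consequently, the set of normalized essential matrices coincides with { E ∈ ℝ^{3×3} : ∃ t ∈ ℝ³, E Eᵀ = [t]× [t]×ᵀ and tᵀt = 1 }. -/
/-!
From `E Eᵀ = [t]× [t]×ᵀ = I - t tᵀ` one gets `Eᵀ t = 0`, so `Eᵀ E` is an idempotent of trace 2, and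
the Cayley–Hamilton form of the 3×3 adjugate gives `adj (Eᵀ E) = I - Eᵀ E`. Hence `c = adj E · t`
is a unit vector with `Eᵀ E + c cᵀ = I`, and `R = [t]×ᵀ E + t cᵀ` is orthogonal with `[t]× R = E`.
Since the adjugate is multiplicative and `adj [t]× = t tᵀ`, we get `c = adj E · t = det R · c`,
so `det R = 1`.
-/

open Matrix

/-- The skew-symmetric cross-product matrix `[t]×` of `t ∈ ℝ³`. -/
noncomputable def skew (t : Fin 3 → ℝ) : Matrix (Fin 3) (Fin 3) ℝ :=
  !![0, -t 2, t 1; t 2, 0, -t 0; -t 1, t 0, 0]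

section CommRing

variable {n α : Type*} [Fintype n] [DecidableEq n] [CommRing α]

theorem adjugate_eq_det_smul_transpose {A : Matrix n n α} (hA : Aᵀ * A = 1) :
    adjugate A = A.det • Aᵀ := by
  calc adjugate A = adjugate A * A * Aᵀ := by
        rw [Matrix.mul_assoc, mul_eq_one_comm.mp hA, Matrix.mul_one]
  _ = A.det • Aᵀ := by rw [adjugate_mul, smul_mul_assoc, Matrix.one_mul]

theorem exists_orthogonal_right_factor {S E : Matrix n n α} {t c : n → α} (ht : t ⬝ᵥ t = 1)
    (hS : S * Sᵀ = 1 - vecMulVec t t) (hSt : S *ᵥ t = 0) (hEt : Eᵀ *ᵥ t = 0)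
    (hc : Eᵀ * E + vecMulVec c c = 1) :
    ∃ R : Matrix n n α, Rᵀ * R = 1 ∧ S * R = E ∧ Rᵀ *ᵥ t = c := by
  have htS : t ᵥ* Sᵀ = 0 := by rw [vecMul_transpose, hSt]
  have htE : t ᵥ* E = 0 := by rw [← mulVec_transpose, hEt]
  refine ⟨Sᵀ * E + vecMulVec t c, ?_, ?_, ?_⟩
  · calc (Sᵀ * E + vecMulVec t c)ᵀ * (Sᵀ * E + vecMulVec t c)
        = Eᵀ * (S * Sᵀ) * E + Eᵀ * (S * vecMulVec t c) + vecMulVec c t * Sᵀ * E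
          + vecMulVec c t * vecMulVec t c := by
          simp only [transpose_add, transpose_mul, transpose_transpose, transpose_vecMulVec]
          noncomm_ring
      _ = Eᵀ * E + vecMulVec c c := by
          rw [hS, mul_vecMulVec, hSt, vecMulVec_mul, htS, vecMulVec_mul_vecMulVec, ht, one_smul]
          simp only [Matrix.mul_sub, Matrix.sub_mul, Matrix.mul_one, Matrix.mul_assoc,
            vecMulVec_mul, htE, zero_vecMulVec, vecMulVec_zero, Matrix.mul_zero, Matrix.zero_mul]
          abel
      _ = 1 := hc
  · rw [Matrix.mul_add, ← Matrix.mul_assoc, hS, mul_vecMulVec, hSt, zero_vecMulVec,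
      Matrix.sub_mul, vecMulVec_mul, htE, vecMulVec_zero]
    simp
  · rw [transpose_add, transpose_mul, transpose_transpose, transpose_vecMulVec, add_mulVec,
      ← mulVec_mulVec, hSt, mulVec_zero, vecMulVec_mulVec, ht, op_smul_eq_smul, one_smul,
      zero_add]

theorem two_smul_adjugate_fin_three (Q : Matrix (Fin 3) (Fin 3) α) :
    (2 : α) • adjugate Q =
      (2 : α) • (Q * Q) - (2 * trace Q) • Q + (trace Q ^ 2 - trace (Q * Q)) • 1 := by
  ext i j
  fin_cases i <;> fin_cases j <;>
    simp [adjugate_fin_three, trace, mul_apply, Fin.sum_univ_three, one_apply] <;> ring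

end CommRing

theorem adjugate_eq_one_sub_of_isIdempotentElem {K : Type*} [Field K] [NeZero (2 : K)]
    {Q : Matrix (Fin 3) (Fin 3) K} (hQ : IsIdempotentElem Q) (htr : trace Q = 2) :
    adjugate Q = 1 - Q := by
  refine smul_right_injective _ (two_ne_zero (α := K)) ?_
  simp only [two_smul_adjugate_fin_three, hQ.eq, htr]
  module

section Real

variable {n : Type*} [Fintype n] [DecidableEq n] {E : Matrix n n ℝ} {t : n → ℝ}

theorem transpose_mulVec_eq_zero_of_mul_transpose_eq (ht : t ⬝ᵥ t = 1)
    (hE : E * Eᵀ = 1 - vecMulVec t t) : Eᵀ *ᵥ t = 0 := by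
  rw [← dotProduct_self_eq_zero]
  calc (Eᵀ *ᵥ t) ⬝ᵥ (Eᵀ *ᵥ t) = t ⬝ᵥ (E * Eᵀ) *ᵥ t := by
        rw [← mulVec_mulVec, dotProduct_mulVec, vecMul_transpose, dotProduct_comm]
    _ = 0 := by
        rw [hE, sub_mulVec, one_mulVec, vecMulVec_mulVec, ht, op_smul_eq_smul, one_smul, sub_self,
          dotProduct_zero]

theorem isIdempotentElem_transpose_mul_self_of_mul_transpose_eq (ht : t ⬝ᵥ t = 1)
    (hE : E * Eᵀ = 1 - vecMulVec t t) : IsIdempotentElem (Eᵀ * E) := by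
  rw [IsIdempotentElem, Matrix.mul_assoc, ← Matrix.mul_assoc E, hE, Matrix.sub_mul,
    Matrix.one_mul, vecMulVec_mul, ← mulVec_transpose,
    transpose_mulVec_eq_zero_of_mul_transpose_eq ht hE, vecMulVec_zero, sub_zero]

theorem trace_transpose_mul_self_of_mul_transpose_eq (ht : t ⬝ᵥ t = 1)
    (hE : E * Eᵀ = 1 - vecMulVec t t) : trace (Eᵀ * E) = Fintype.card n - 1 := by
  rw [trace_mul_comm, hE, trace_sub, trace_one, trace_vecMulVec, ht]

end Real

theorem skew_mulVec_self (t : Fin 3 → ℝ) : skew t *ᵥ t = 0 := by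
  ext i
  fin_cases i <;> simp [skew, mulVec, dotProduct, Fin.sum_univ_three] <;> ring

theorem skew_mul_transpose_self {t : Fin 3 → ℝ} (ht : t ⬝ᵥ t = 1) :
    skew t * (skew t)ᵀ = 1 - vecMulVec t t := by
  simp only [dotProduct, Fin.sum_univ_three] at ht
  ext i j
  fin_cases i <;> fin_cases j <;>
    simp [skew, mul_apply, vecMulVec_apply, Fin.sum_univ_three, one_apply] <;>
    first | ring1 | linear_combination ht

theorem adjugate_skew (t : Fin 3 → ℝ) : adjugate (skew t) = vecMulVec t t := by
  ext i j
  fin_cases i <;> fin_cases j <;> simp [skew, adjugate_fin_three, vecMulVec_apply] <;> ring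

theorem vecMulVec_adjugate_mulVec_self {E : Matrix (Fin 3) (Fin 3) ℝ} {t : Fin 3 → ℝ}
    (ht : t ⬝ᵥ t = 1) (hE : E * Eᵀ = 1 - vecMulVec t t) :
    vecMulVec (adjugate E *ᵥ t) (adjugate E *ᵥ t) = 1 - Eᵀ * E := by
  have hdet : E.det = 0 := by
    rw [← det_transpose]
    exact exists_mulVec_eq_zero_iff.mp
      ⟨t, fun h0 => by simp [h0] at ht, transpose_mulVec_eq_zero_of_mul_transpose_eq ht hE⟩
  have hGt : adjugate E * vecMulVec t t = adjugate E := by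
    rw [show vecMulVec t t = 1 - E * Eᵀ by rw [hE, sub_sub_cancel], Matrix.mul_sub,
      Matrix.mul_one, ← Matrix.mul_assoc, adjugate_mul, hdet, zero_smul, Matrix.zero_mul,
      sub_zero]
  calc vecMulVec (adjugate E *ᵥ t) (adjugate E *ᵥ t)
      = adjugate E * vecMulVec t t * (adjugate E)ᵀ := by
        rw [Matrix.mul_assoc, vecMulVec_mul, vecMul_transpose, mul_vecMulVec]
    _ = adjugate (Eᵀ * E) := by rw [hGt, adjugate_transpose, adjugate_mul_distrib]
    _ = 1 - Eᵀ * E := by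
        refine adjugate_eq_one_sub_of_isIdempotentElem
          (isIdempotentElem_transpose_mul_self_of_mul_transpose_eq ht hE) ?_
        rw [trace_transpose_mul_self_of_mul_transpose_eq ht hE]
        norm_num

theorem exists_rotation_eq_skew_mul {E : Matrix (Fin 3) (Fin 3) ℝ} {t : Fin 3 → ℝ}
    (ht : t ⬝ᵥ t = 1) (h : E * Eᵀ = skew t * (skew t)ᵀ) :
    ∃ R : Matrix (Fin 3) (Fin 3) ℝ, Rᵀ * R = 1 ∧ R.det = 1 ∧ E = skew t * R := by
  have hE : E * Eᵀ = 1 - vecMulVec t t := h.trans (skew_mul_transpose_self ht)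
  set c := adjugate E *ᵥ t
  have hcc : vecMulVec c c = 1 - Eᵀ * E := vecMulVec_adjugate_mulVec_self ht hE
  obtain ⟨R, hR, hSR, hRt⟩ := exists_orthogonal_right_factor ht (skew_mul_transpose_self ht)
    (skew_mulVec_self t) (transpose_mulVec_eq_zero_of_mul_transpose_eq ht hE)
    (by rw [hcc, add_sub_cancel])
  have hc : c ⬝ᵥ c = 1 := by
    rw [← trace_vecMulVec, hcc, trace_sub, trace_one,
      trace_transpose_mul_self_of_mul_transpose_eq ht hE]
    norm_num
  have hc_eq : c = R.det • c := calc
    c = adjugate R *ᵥ (adjugate (skew t) *ᵥ t) := by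
      rw [mulVec_mulVec, ← adjugate_mul_distrib, hSR]
    _ = R.det • c := by
      rw [adjugate_skew, vecMulVec_mulVec, ht, op_smul_eq_smul, one_smul,
        adjugate_eq_det_smul_transpose hR, smul_mulVec, hRt]
  have hdet : R.det = 1 := by
    simpa [dotProduct_smul, hc] using (congrArg (c ⬝ᵥ ·) hc_eq).symm
  exact ⟨R, hR, hdet, hSR.symm⟩

/-- If `E Eᵀ = [t]× [t]×ᵀ` with `tᵀ t = 1`, then `E = [t]× R` for some `R ∈ SO(3)`.
Consequently, the set of normalized essential matrices coincides with
`{ E : ∃ t, E Eᵀ = [t]× [t]×ᵀ ∧ tᵀ t = 1 }`. -/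
theorem essential_matrix_characterization :
    (∀ (E : Matrix (Fin 3) (Fin 3) ℝ) (t : Fin 3 → ℝ), t ⬝ᵥ t = 1 →
      E * Eᵀ = skew t * (skew t)ᵀ →
      ∃ R : Matrix (Fin 3) (Fin 3) ℝ, Rᵀ * R = 1 ∧ R.det = 1 ∧ E = skew t * R) ∧
    {E : Matrix (Fin 3) (Fin 3) ℝ |
        ∃ (t : Fin 3 → ℝ) (R : Matrix (Fin 3) (Fin 3) ℝ),
          t ⬝ᵥ t = 1 ∧ Rᵀ * R = 1 ∧ R.det = 1 ∧ E = skew t * R} =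
      {E : Matrix (Fin 3) (Fin 3) ℝ |
        ∃ t : Fin 3 → ℝ, E * Eᵀ = skew t * (skew t)ᵀ ∧ t ⬝ᵥ t = 1} := by
  refine ⟨fun E t ht h => exists_rotation_eq_skew_mul ht h, Set.ext fun E => ⟨?_, ?_⟩⟩
  · rintro ⟨t, R, ht, hR, -, rfl⟩
    refine ⟨t, ?_, ht⟩
    rw [transpose_mul, Matrix.mul_assoc, ← Matrix.mul_assoc R, mul_eq_one_comm.mp hR,
      Matrix.one_mul]
  · rintro ⟨t, h, ht⟩
    obtain ⟨R, hR, hdet, rfl⟩ := exists_rotation_eq_skew_mul ht h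
    exact ⟨t, R, ht, hR, hdet, rfl⟩
end

section
/- There exist E ∈ ℝ^{3×3} and t ∈ ℝ³ satisfying the six relaxed constraints h₁(E,t) = h₂(E,t) = h₃(E,t) = h₄(E,t) = h₅(E,t) = h₆(E,t) = 0 such that E is not a normalized essential matrix, i.e. there are no s ∈ ℝ³ with sᵀs = 1 and R ∈ SO(3) with E = [s]× R. Hence the relaxed set { (E,t) : hᵢ(E,t) = 0, i = 1,…,6 } is a strict superset of the set of normalized essential matrices. -/
open Matrix

/-- The six relaxed constraint functions `h₁,…,h₆` all vanish at `(E, t)`. -/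
def RelaxedConstraints (E : Matrix (Fin 3) (Fin 3) ℝ) (t : Fin 3 → ℝ) : Prop :=
  t ⬝ᵥ t - 1 = 0 ∧
  E 0 ⬝ᵥ E 0 - (t 1 ^ 2 + t 2 ^ 2) = 0 ∧
  E 1 ⬝ᵥ E 1 - (t 0 ^ 2 + t 2 ^ 2) = 0 ∧
  E 2 ⬝ᵥ E 2 - (t 0 ^ 2 + t 1 ^ 2) = 0 ∧
  E 0 ⬝ᵥ E 2 + t 0 * t 2 = 0 ∧
  E 1 ⬝ᵥ E 2 + t 1 * t 2 = 0

/-- `E` is a normalized essential matrix. -/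
def IsNormalizedEssential (E : Matrix (Fin 3) (Fin 3) ℝ) : Prop :=
  ∃ (s : Fin 3 → ℝ) (R : Matrix (Fin 3) (Fin 3) ℝ),
    s ⬝ᵥ s = 1 ∧ Rᵀ * R = 1 ∧ R.det = 1 ∧ E = skew s * R

/-! The relaxed constraints only see the Gram matrix `E Eᵀ`, and for `E = [s]× R` this is
`I - s sᵀ`, so every normalized essential matrix satisfies them with `t = s`. Conversely the
off-diagonal entries of `I - s sᵀ` with `|s| = 1` are at most `1/2` in absolute value, while
the matrix with rows `(1,0,0), (1,0,0), 0` satisfies the constraints with `t = e₃` and has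
`(E Eᵀ)₀₁ = 1`. -/

namespace Matrix

variable {m n α : Type*} [Fintype n] [CommRing α]

theorem dotProduct_row_eq_mul_transpose_apply (A : Matrix m n α) (i j : m) :
    A i ⬝ᵥ A j = (A * Aᵀ) i j := by
  rw [mul_apply']
  rfl

theorem mul_orthogonal_mul_transpose [DecidableEq n] (A : Matrix m n α) {R : Matrix n n α}
    (hR : Rᵀ * R = 1) : A * R * (A * R)ᵀ = A * Aᵀ := by
  rw [transpose_mul, Matrix.mul_assoc, ← Matrix.mul_assoc R, mul_eq_one_comm.mp hR,
    Matrix.one_mul]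

end Matrix

theorem skew_mul_transpose (s : Fin 3 → ℝ) :
    skew s * (skew s)ᵀ = (s ⬝ᵥ s) • 1 - vecMulVec s s := by
  ext i j
  fin_cases i <;> fin_cases j <;>
    simp [skew, dotProduct, vecMulVec, Fin.sum_univ_three, mul_apply] <;> ring

theorem IsNormalizedEssential.mul_transpose {E : Matrix (Fin 3) (Fin 3) ℝ}
    (hE : IsNormalizedEssential E) :
    ∃ s : Fin 3 → ℝ, s ⬝ᵥ s = 1 ∧ E * Eᵀ = 1 - vecMulVec s s := by
  obtain ⟨s, R, hs, hR, -, rfl⟩ := hE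
  refine ⟨s, hs, ?_⟩
  rw [mul_orthogonal_mul_transpose _ hR, skew_mul_transpose, hs, one_smul]

theorem IsNormalizedEssential.exists_relaxedConstraints {E : Matrix (Fin 3) (Fin 3) ℝ}
    (hE : IsNormalizedEssential E) : ∃ t, RelaxedConstraints E t := by
  obtain ⟨s, hs, hgram⟩ := hE.mul_transpose
  have hs' : s 0 ^ 2 + s 1 ^ 2 + s 2 ^ 2 = 1 := by
    simpa [dotProduct, Fin.sum_univ_three, sq] using hs
  refine ⟨s, ?_⟩
  simp only [RelaxedConstraints, dotProduct_row_eq_mul_transpose_apply, hgram, hs, sub_self]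
  simp only [vecMulVec, Matrix.sub_apply, one_apply_eq, one_apply_ne, of_apply, ne_eq,
    Fin.reduceEq, not_false_eq_true, zero_sub, neg_add_cancel, and_true, true_and]
  refine ⟨?_, ?_, ?_⟩ <;> linear_combination -hs'

def relaxedCounterexample : Matrix (Fin 3) (Fin 3) ℝ := !![1, 0, 0; 1, 0, 0; 0, 0, 0]

theorem relaxedConstraints_relaxedCounterexample :
    RelaxedConstraints relaxedCounterexample ![0, 0, 1] := by
  simp [RelaxedConstraints, relaxedCounterexample, dotProduct, Fin.sum_univ_three]

theorem not_isNormalizedEssential_relaxedCounterexample :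
    ¬ IsNormalizedEssential relaxedCounterexample := by
  intro hE
  obtain ⟨s, hs, hgram⟩ := hE.mul_transpose
  have h01 : (1 : ℝ) = -(s 0 * s 1) := by
    simpa [relaxedCounterexample, mul_apply, Fin.sum_univ_three, vecMulVec] using
      congrFun (congrFun hgram 0) 1
  simp only [dotProduct, Fin.sum_univ_three] at hs
  nlinarith [sq_nonneg (s 0 + s 1), mul_self_nonneg (s 2)]

/-- There is a pair `(E, t)` satisfying the six relaxed constraints such that `E` is not
a normalized essential matrix; hence the relaxed set is a strict superset of the set of
normalized essential matrices. -/
theorem relaxed_set_strict_superset :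
    (∃ (E : Matrix (Fin 3) (Fin 3) ℝ) (t : Fin 3 → ℝ),
      RelaxedConstraints E t ∧ ¬ IsNormalizedEssential E) ∧
    {E : Matrix (Fin 3) (Fin 3) ℝ | IsNormalizedEssential E} ⊂
      {E : Matrix (Fin 3) (Fin 3) ℝ | ∃ t : Fin 3 → ℝ, RelaxedConstraints E t} :=
  ⟨⟨_, _, relaxedConstraints_relaxedCounterexample,
      not_isNormalizedEssential_relaxedCounterexample⟩,
    fun _ hE ↦ hE.exists_relaxedConstraints,
    fun hsub ↦ not_isNormalizedEssential_relaxedCounterexample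
      (hsub ⟨_, relaxedConstraints_relaxedCounterexample⟩)⟩
end

section
/- Let r ∈ ℝ, μ > 0, c̄ > 0, and define g : [0,1] → ℝ by g(w) = w r² + Ψ_{c̄}(w,μ) where Ψ_{c̄}(w,μ) = (μ c̄²/3)(1 − √w)²(1 + 2√w). Then g attains its minimum over [0,1] at w* = (1 − r²/(μ c̄²))² if r² ≤ μ c̄², and at w* = 0 if r² > μ c̄²; that is, g(w*) ≤ g(w) for all w ∈ [0,1]. In particular w* ∈ [0,1]. -/
/-!
Substituting `s = √w` and writing `A = μ c̄²`, the objective becomes the cubic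
`φ(s) = s² r² + (A/3)(1 − s)²(1 + 2s) = A/3 + (r² − A) s² + (2A/3) s³` on `s ∈ [0, 1]`.
If `r² = A (1 − t)` with `t ≥ 0`, then `φ(s) − φ(t) = (A/3)(s − t)²(2s + t) ≥ 0`;
if `r² > A`, then `φ(s) − φ(0) = (r² − A) s² + (2A/3) s³ ≥ 0`.
-/

open Real Set

/-- The objective `w r² + Ψ_{c̄}(w, μ)` as a function of `s = √w`, with `A = μ c̄²`. -/
noncomputable def tukeyCost (A r s : ℝ) : ℝ := s ^ 2 * r ^ 2 + A / 3 * (1 - s) ^ 2 * (1 + 2 * s)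

theorem tukeyCost_sub_of_sq_eq {A r t : ℝ} (h : r ^ 2 = A * (1 - t)) (s : ℝ) :
    tukeyCost A r s - tukeyCost A r t = A / 3 * (s - t) ^ 2 * (2 * s + t) := by
  unfold tukeyCost
  rw [h]
  ring

theorem tukeyCost_le_of_sq_eq {A r s t : ℝ} (hA : 0 ≤ A) (hs : 0 ≤ s) (ht : 0 ≤ t)
    (h : r ^ 2 = A * (1 - t)) : tukeyCost A r t ≤ tukeyCost A r s := by
  have hdiff := tukeyCost_sub_of_sq_eq h s
  have : 0 ≤ A / 3 * (s - t) ^ 2 * (2 * s + t) := by positivity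
  linarith

theorem tukeyCost_sub_zero (A r s : ℝ) :
    tukeyCost A r s - tukeyCost A r 0 = (r ^ 2 - A) * s ^ 2 + 2 * A / 3 * s ^ 3 := by
  unfold tukeyCost
  ring

theorem tukeyCost_zero_le {A r s : ℝ} (hA : 0 ≤ A) (hr : A ≤ r ^ 2) (hs : 0 ≤ s) :
    tukeyCost A r 0 ≤ tukeyCost A r s := by
  have hdiff := tukeyCost_sub_zero A r s
  have : 0 ≤ (r ^ 2 - A) * s ^ 2 + 2 * A / 3 * s ^ 3 := by
    have : 0 ≤ r ^ 2 - A := sub_nonneg.2 hr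
    positivity
  linarith

/-- Closed-form minimizer of `w ↦ w r² + Ψ_{c̄}(w, μ)` over `[0, 1]`, where
`Ψ_{c̄}(w, μ) = (μ c̄²/3)(1 − √w)²(1 + 2√w)` is the Tukey biweight outlier process:
the minimum is attained at `w* = (1 − r²/(μ c̄²))²` if `r² ≤ μ c̄²`, and at `w* = 0`
otherwise. -/
theorem tukey_weight_update_optimal (r μ cbar : ℝ) (hμ : 0 < μ) (hc : 0 < cbar) :
    let g : ℝ → ℝ := fun w =>
      w * r ^ 2 + μ * cbar ^ 2 / 3 * (1 - Real.sqrt w) ^ 2 * (1 + 2 * Real.sqrt w)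
    let wstar : ℝ :=
      if r ^ 2 ≤ μ * cbar ^ 2 then (1 - r ^ 2 / (μ * cbar ^ 2)) ^ 2 else 0
    wstar ∈ Set.Icc (0 : ℝ) 1 ∧ ∀ w ∈ Set.Icc (0 : ℝ) 1, g wstar ≤ g w := by
  intro g wstar
  have hA : 0 < μ * cbar ^ 2 := by positivity
  have hg : ∀ w ∈ Icc (0 : ℝ) 1, g w = tukeyCost (μ * cbar ^ 2) r (√w) := fun w hw => by
    simp only [g, tukeyCost, sq_sqrt hw.1]
  by_cases hr : r ^ 2 ≤ μ * cbar ^ 2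
  · set t := 1 - r ^ 2 / (μ * cbar ^ 2) with ht_def
    have ht : t ∈ Icc (0 : ℝ) 1 :=
      ⟨sub_nonneg.2 ((div_le_one hA).2 hr), sub_le_self _ (by positivity)⟩
    have hwstar : wstar = t ^ 2 := if_pos hr
    have hmem : wstar ∈ Icc (0 : ℝ) 1 := by
      rw [hwstar]; exact ⟨sq_nonneg t, pow_le_one₀ ht.1 ht.2⟩
    refine ⟨hmem, fun w hw => ?_⟩
    rw [hg _ hmem, hg w hw, hwstar, sqrt_sq ht.1]
    exact tukeyCost_le_of_sq_eq hA.le (sqrt_nonneg w) ht.1 (by rw [ht_def]; field_simp; ring)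
  · have hwstar : wstar = 0 := if_neg hr
    have hmem : wstar ∈ Icc (0 : ℝ) 1 := by
      rw [hwstar]; exact ⟨le_rfl, zero_le_one⟩
    refine ⟨hmem, fun w hw => ?_⟩
    rw [hg _ hmem, hg w hw, hwstar, sqrt_zero]
    exact tukeyCost_zero_le hA.le (le_of_not_ge hr) (sqrt_nonneg w)
end

section
/- Let r ∈ ℝ, μ > 0, c̄ > 0. Then min_{w ∈ [0,1]} ( w r² + Ψ_{c̄}(w,μ) ) = μ c̄² · ρ_{c̄}(r,μ), where Ψ_{c̄}(w,μ) = (μ c̄²/3)(1 − √w)²(1 + 2√w) and ρ_{c̄}(r,μ) equals u − u² + u³/3 with u = r²/(μ c̄²) when r² ≤ μ c̄², and equals 1/3 when r² > μ c̄². (This is the Black–Rangarajan duality between the Tukey biweight robust loss and its line process.) -/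
/-!
Substituting `s = √w`, the objective becomes the cubic
`s² r² + (a/3)(1 - s)²(1 + 2s)` on `s ∈ [0, 1]`, where `a = μ c̄²`.
When `r² ≤ a`, put `u = r²/a`; the cubic exceeds `a (u - u² + u³/3)` by
`(2a/3)(s - (1 - u))²(s + (1 - u)/2) ≥ 0`, with equality at `s = 1 - u`.
When `r² > a`, it exceeds `a/3` by `s² ((1 - 2s/3)(r² - a) + (2s/3) r²) ≥ 0`,
with equality at `s = 0`.
-/

open Set

namespace Tukey

/-- The Black–Rangarajan objective `w r² + Ψ(w)` written in `s = √w`, with `a = μ c̄²` and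
`x = r²`. -/
noncomputable def objective (a x s : ℝ) : ℝ :=
  s ^ 2 * x + a / 3 * (1 - s) ^ 2 * (1 + 2 * s)

/-- The Tukey biweight surrogate `ρ_{c̄}(r, μ)` with `a = μ c̄²` and `x = r²`. -/
noncomputable def rho (a x : ℝ) : ℝ :=
  if x ≤ a then x / a - (x / a) ^ 2 + (x / a) ^ 3 / 3 else 1 / 3

theorem objective_mul_eq (a u s : ℝ) :
    objective a (a * u) s =
      a * (u - u ^ 2 + u ^ 3 / 3) + 2 * a / 3 * (s - (1 - u)) ^ 2 * (s + (1 - u) / 2) := by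
  unfold objective
  ring

theorem objective_eq (a x s : ℝ) :
    objective a x s = a / 3 + s ^ 2 * ((1 - 2 * s / 3) * (x - a) + 2 * s / 3 * x) := by
  unfold objective
  ring

theorem isLeast_objective_of_le {a x : ℝ} (hx : 0 ≤ x) (hxa : x ≤ a) :
    IsLeast (objective a x '' Icc 0 1) (a * (x / a - (x / a) ^ 2 + (x / a) ^ 3 / 3)) := by
  set u := x / a
  have hu0 : 0 ≤ u := div_nonneg hx (hx.trans hxa)
  have hu1 : u ≤ 1 := div_le_one_of_le₀ hxa (hx.trans hxa)
  have hxu : x = a * u := by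
    rcases eq_or_ne a 0 with rfl | ha
    · simp only [zero_mul]; linarith
    · exact (mul_div_cancel₀ x ha).symm
  rw [hxu]
  refine ⟨⟨1 - u, ⟨by linarith, by linarith⟩, by simp [objective_mul_eq]⟩, ?_⟩
  rintro _ ⟨s, ⟨hs0, -⟩, rfl⟩
  have hgap : 0 ≤ 2 * a / 3 * (s - (1 - u)) ^ 2 * (s + (1 - u) / 2) := by
    have : 0 ≤ a := hx.trans hxa
    have : 0 ≤ s + (1 - u) / 2 := by linarith
    positivity
  rw [objective_mul_eq]
  linarith

theorem isLeast_objective_of_lt {a x : ℝ} (hx : 0 ≤ x) (hax : a < x) :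
    IsLeast (objective a x '' Icc 0 1) (a * (1 / 3)) := by
  refine ⟨⟨0, ⟨le_rfl, zero_le_one⟩, by simp [objective_eq]; ring⟩, ?_⟩
  rintro _ ⟨s, ⟨hs0, hs1⟩, rfl⟩
  have hgap : 0 ≤ s ^ 2 * ((1 - 2 * s / 3) * (x - a) + 2 * s / 3 * x) := by
    have : 0 ≤ 1 - 2 * s / 3 := by linarith
    have : 0 ≤ x - a := by linarith
    positivity
  rw [objective_eq]
  linarith

theorem isLeast_objective {a x : ℝ} (hx : 0 ≤ x) :
    IsLeast (objective a x '' Icc 0 1) (a * rho a x) := by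
  unfold rho
  split_ifs with hxa
  · exact isLeast_objective_of_le hx hxa
  · exact isLeast_objective_of_lt hx (not_le.mp hxa)

end Tukey

theorem Real.sqrt_image_Icc_zero_one : Real.sqrt '' Icc 0 1 = Icc 0 1 := by
  ext s
  constructor
  · rintro ⟨w, ⟨-, hw1⟩, rfl⟩
    exact ⟨Real.sqrt_nonneg w, Real.sqrt_le_one.mpr hw1⟩
  · rintro ⟨hs0, hs1⟩
    exact ⟨s ^ 2, ⟨sq_nonneg s, pow_le_one₀ hs0 hs1⟩, Real.sqrt_sq hs0⟩

theorem black_rangarajan_tukey_general (r μ cbar : ℝ) :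
    IsLeast
      ((fun w : ℝ =>
          w * r ^ 2 + μ * cbar ^ 2 / 3 * (1 - Real.sqrt w) ^ 2 * (1 + 2 * Real.sqrt w)) ''
        Set.Icc (0 : ℝ) 1)
      (μ * cbar ^ 2 *
        if r ^ 2 ≤ μ * cbar ^ 2 then
          r ^ 2 / (μ * cbar ^ 2) - (r ^ 2 / (μ * cbar ^ 2)) ^ 2 +
            (r ^ 2 / (μ * cbar ^ 2)) ^ 3 / 3
        else 1 / 3) := by
  have himage :
      (fun w : ℝ =>
          w * r ^ 2 + μ * cbar ^ 2 / 3 * (1 - Real.sqrt w) ^ 2 * (1 + 2 * Real.sqrt w)) ''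
        Icc 0 1 = Tukey.objective (μ * cbar ^ 2) (r ^ 2) '' Icc 0 1 := by
    conv_rhs => rw [← Real.sqrt_image_Icc_zero_one, ← image_comp]
    refine image_congr fun w hw => ?_
    simp only [Function.comp, Tukey.objective, Real.sq_sqrt hw.1]
  rw [himage]
  exact Tukey.isLeast_objective (sq_nonneg r)

/-- Black–Rangarajan duality for the Tukey biweight GNC surrogate: the minimum over
`w ∈ [0,1]` of `w r² + Ψ_{c̄}(w, μ)`, with outlier process
`Ψ_{c̄}(w, μ) = (μ c̄²/3)(1 − √w)²(1 + 2√w)`, equals `μ c̄² · ρ_{c̄}(r, μ)`, where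
`ρ_{c̄}(r, μ) = u − u² + u³/3` with `u = r²/(μ c̄²)` when `r² ≤ μ c̄²`, and `1/3`
otherwise. -/
theorem black_rangarajan_tukey (r μ cbar : ℝ) (hμ : 0 < μ) (hc : 0 < cbar) :
    IsLeast
      ((fun w : ℝ =>
          w * r ^ 2 + μ * cbar ^ 2 / 3 * (1 - Real.sqrt w) ^ 2 * (1 + 2 * Real.sqrt w)) ''
        Set.Icc (0 : ℝ) 1)
      (μ * cbar ^ 2 *
        if r ^ 2 ≤ μ * cbar ^ 2 then
          r ^ 2 / (μ * cbar ^ 2) - (r ^ 2 / (μ * cbar ^ 2)) ^ 2 +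
            (r ^ 2 / (μ * cbar ^ 2)) ^ 3 / 3
        else 1 / 3) :=
  black_rangarajan_tukey_general r μ cbar
end
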